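/- Approximate correctability implies approximate distinguishability preservation: let N be a quantum channel from a d_A-dimensional system A (with d_A ≥ 2) to a d_B-dimensional system B, and suppose there exists a quantum channel R from B to A such that ‖R(N(ρ)) − ρ‖₁ ≤ ε for every density matrix ρ on A. Then DP_min(N) ≥ 1 − 2ε. -/

import Mathlib

open Matrix ComplexOrder

/-- Trace norm of a square complex matrix. -/
noncomputable def traceNorm {n : Type*} [Fintype n] [DecidableEq n]
    (X : Matrix n n ℂ) : ℝ :=
  (((Matrix.posSemidef_conjTranspose_mul_self X).1.eigenvectorUnitary.1 *
      diagonal ((fun x : ℝ => (x : ℂ)) ∘ (√·) ∘ (Matrix.posSemidef_conjTranspose_mul_self X).1.eigenvalues) *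
      (star (Matrix.posSemidef_conjTranspose_mul_self X).1.eigenvectorUnitary : Matrix n n ℂ)).trace).re

/-- A density matrix: positive semidefinite with unit trace. -/
def IsDensityMatrix {n : Type*} [Fintype n] [DecidableEq n] (ρ : Matrix n n ℂ) : Prop :=
  ρ.PosSemidef ∧ ρ.trace = 1

/-- A quantum channel: a linear map admitting a Kraus representation. -/
def IsQuantumChannel {dA dB : ℕ}
    (N : Matrix (Fin dA) (Fin dA) ℂ →ₗ[ℂ] Matrix (Fin dB) (Fin dB) ℂ) : Prop :=
  ∃ (k : ℕ) (K : Fin k → Matrix (Fin dB) (Fin dA) ℂ),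
    (∀ X, N X = ∑ i, K i * X * (K i)ᴴ) ∧ (∑ i, (K i)ᴴ * K i = 1)

/-- Maximum causal effect. -/
noncomputable def CEmax {dA dB : ℕ}
    (N : Matrix (Fin dA) (Fin dA) ℂ →ₗ[ℂ] Matrix (Fin dB) (Fin dB) ℂ) : ℝ :=
  sSup {x : ℝ | ∃ ρ ρ' : Matrix (Fin dA) (Fin dA) ℂ,
    IsDensityMatrix ρ ∧ IsDensityMatrix ρ' ∧ ρ ≠ ρ' ∧
    x = traceNorm (N ρ - N ρ') / traceNorm (ρ - ρ')}

/-- Minimum causal effect. -/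
noncomputable def CEmin {dA dB : ℕ}
    (N : Matrix (Fin dA) (Fin dA) ℂ →ₗ[ℂ] Matrix (Fin dB) (Fin dB) ℂ) : ℝ :=
  sInf {x : ℝ | ∃ ρ ρ' : Matrix (Fin dA) (Fin dA) ℂ,
    IsDensityMatrix ρ ∧ IsDensityMatrix ρ' ∧ ρ ≠ ρ' ∧
    x = traceNorm (N ρ - N ρ') / traceNorm (ρ - ρ')}

/-- Minimum distinguishability preservation. -/
noncomputable def DPmin {dA dB : ℕ}
    (N : Matrix (Fin dA) (Fin dA) ℂ →ₗ[ℂ] Matrix (Fin dB) (Fin dB) ℂ) : ℝ :=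
  sInf {x : ℝ | ∃ p : ℝ, 0 ≤ p ∧ p ≤ 1 ∧
    ∃ ρ ρ' : Matrix (Fin dA) (Fin dA) ℂ,
      IsDensityMatrix ρ ∧ IsDensityMatrix ρ' ∧ ρ ≠ ρ' ∧
      x = traceNorm ((p : ℂ) • N ρ - ((1 - p : ℝ) : ℂ) • N ρ') /
          traceNorm ((p : ℂ) • ρ - ((1 - p : ℝ) : ℂ) • ρ')}

/-!
For Hermitian `A = P - Q` with `P, Q ⪰ 0` one has `‖A‖₁ ≤ tr P + tr Q` (compare diagonal entries
in an eigenbasis of `A`), with equality for the Jordan decomposition `A = A⁺ - A⁻`. Hence a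
Hermitian-preserving linear map `Φ` with `‖Φ ρ‖₁ ≤ ε` on density matrices satisfies
`‖Φ A‖₁ ≤ ε ‖A‖₁` on Hermitian matrices. Applied to the channel `R` (with `ε = 1`) and to
`R ∘ N - id`, this gives `‖Δ‖₁ ≤ ‖R (N Δ)‖₁ + ε ‖Δ‖₁ ≤ ‖N Δ‖₁ + ε ‖Δ‖₁` for
`Δ = p ρ - (1 - p) ρ'`.
-/

open scoped MatrixOrder

lemma Matrix.PosSemidef.ofReal_re_trace {n : Type*} [Fintype n] {P : Matrix n n ℂ}
    (hP : P.PosSemidef) : (P.trace.re : ℂ) = P.trace :=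
  Complex.ext rfl (Complex.nonneg_iff.mp hP.trace_nonneg).2

section TraceNorm

variable {n : Type*} [Fintype n] [DecidableEq n]

lemma traceNorm_eq_re_trace_abs (X : Matrix n n ℂ) : traceNorm X = (CFC.abs X).trace.re := by
  rw [traceNorm, CFC.abs, CFC.sqrt_eq_cfc, star_eq_conjTranspose X,
    cfc_nnreal_eq_real _ (Xᴴ * X) (posSemidef_conjTranspose_mul_self X).nonneg,
    (posSemidef_conjTranspose_mul_self X).1.cfc_eq, IsHermitian.cfc, Unitary.conjStarAlgAut_apply]
  congr 6
  funext i
  simp only [Function.comp_apply, Real.coe_sqrt, Real.coe_toNNReal',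
    max_eq_left ((posSemidef_conjTranspose_mul_self X).eigenvalues_nonneg i)]

lemma traceNorm_nonneg (X : Matrix n n ℂ) : 0 ≤ traceNorm X := by
  rw [traceNorm_eq_re_trace_abs]
  exact (RCLike.nonneg_iff.mp (CFC.abs_nonneg X).posSemidef.trace_nonneg).1

lemma traceNorm_pos {X : Matrix n n ℂ} (hX : X ≠ 0) : 0 < traceNorm X := by
  refine (traceNorm_nonneg X).lt_of_ne fun h => hX ?_
  have habs : (CFC.abs X).PosSemidef := (CFC.abs_nonneg X).posSemidef
  have htr : (CFC.abs X).trace = 0 := by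
    rw [← habs.ofReal_re_trace, ← traceNorm_eq_re_trace_abs, ← h, Complex.ofReal_zero]
  rw [← conjTranspose_mul_self_eq_zero, ← star_eq_conjTranspose, ← CFC.abs_mul_abs,
    habs.trace_eq_zero_iff.mp htr, zero_mul]

lemma traceNorm_real_smul {t : ℝ} (ht : 0 ≤ t) (X : Matrix n n ℂ) :
    traceNorm ((t : ℂ) • X) = t * traceNorm X := by
  lift t to NNReal using ht
  rw [traceNorm_eq_re_trace_abs, traceNorm_eq_re_trace_abs, Complex.coe_smul, ← NNReal.smul_def,
    CFC.abs_smul_nonneg, trace_smul, NNReal.smul_def, Complex.real_smul, Complex.re_ofReal_mul]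

lemma trace_conjStarAlgAut (u : unitary (Matrix n n ℂ)) (M : Matrix n n ℂ) :
    (Unitary.conjStarAlgAut ℂ _ u M).trace = M.trace := by
  rw [Unitary.conjStarAlgAut_apply, trace_mul_cycle, Unitary.coe_star_mul_self, one_mul]

lemma Matrix.IsHermitian.trace_cfc {A : Matrix n n ℂ} (hA : A.IsHermitian) (f : ℝ → ℝ) :
    (cfc f A).trace = ∑ i, (f (hA.eigenvalues i) : ℂ) := by
  rw [hA.cfc_eq, IsHermitian.cfc, trace_conjStarAlgAut, trace_diagonal]
  rfl

lemma Matrix.IsHermitian.traceNorm_eq_sum_abs_eigenvalues {A : Matrix n n ℂ}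
    (hA : A.IsHermitian) : traceNorm A = ∑ i, |hA.eigenvalues i| := by
  rw [traceNorm_eq_re_trace_abs, CFC.abs_eq_cfc_norm A hA.isSelfAdjoint, hA.trace_cfc]
  simp

lemma Matrix.PosSemidef.traceNorm_eq {P : Matrix n n ℂ} (hP : P.PosSemidef) :
    traceNorm P = P.trace.re := by
  rw [traceNorm_eq_re_trace_abs, CFC.abs_of_nonneg P hP.nonneg]

lemma Matrix.IsHermitian.traceNorm_eq_posPart_add_negPart {A : Matrix n n ℂ}
    (hA : A.IsHermitian) : traceNorm A = A⁺.trace.re + A⁻.trace.re := by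
  rw [traceNorm_eq_re_trace_abs, ← CFC.posPart_add_negPart A hA.isSelfAdjoint, trace_add,
    Complex.add_re]

lemma Matrix.PosSemidef.traceNorm_sub_le {P Q : Matrix n n ℂ} (hP : P.PosSemidef)
    (hQ : Q.PosSemidef) : traceNorm (P - Q) ≤ P.trace.re + Q.trace.re := by
  have hA : (P - Q).IsHermitian := hP.1.sub hQ.1
  set D := Unitary.conjStarAlgAut ℂ _ (star hA.eigenvectorUnitary)
  have hD : ∀ {M : Matrix n n ℂ}, M.PosSemidef → ∀ i, 0 ≤ (D M i i).re := fun hM _ =>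
    (RCLike.nonneg_iff.mp (hM.mul_mul_conjTranspose_same _).diag_nonneg).1
  have heig : ∀ i, hA.eigenvalues i = (D P i i).re - (D Q i i).re := fun i => by
    have h := congr(($hA.conjStarAlgAut_star_eigenvectorUnitary) i i)
    rw [map_sub, Matrix.sub_apply, diagonal_apply_eq, Function.comp_apply] at h
    rw [← Complex.sub_re, h]
    exact (RCLike.ofReal_re (K := ℂ) _).symm
  calc traceNorm (P - Q) = ∑ i, |hA.eigenvalues i| := hA.traceNorm_eq_sum_abs_eigenvalues
    _ ≤ ∑ i, ((D P i i).re + (D Q i i).re) := Finset.sum_le_sum fun i _ => by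
        rw [heig, abs_le]; constructor <;> linarith [hD hP i, hD hQ i]
    _ = P.trace.re + Q.trace.re := by
        rw [Finset.sum_add_distrib, ← Complex.re_sum, ← Complex.re_sum, ← trace_conjStarAlgAut _ P,
          ← trace_conjStarAlgAut _ Q]
        rfl

lemma Matrix.IsHermitian.traceNorm_sub_le {A B : Matrix n n ℂ} (hA : A.IsHermitian)
    (hB : B.IsHermitian) : traceNorm (A - B) ≤ traceNorm A + traceNorm B := by
  have hA' := hA.isSelfAdjoint
  have hB' := hB.isSelfAdjoint
  have hsplit : A - B = (A⁺ + B⁻) - (A⁻ + B⁺) := by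
    nth_rw 1 [← CFC.posPart_sub_negPart A, ← CFC.posPart_sub_negPart B]
    abel
  rw [hsplit, hA.traceNorm_eq_posPart_add_negPart, hB.traceNorm_eq_posPart_add_negPart]
  refine (PosSemidef.traceNorm_sub_le ?_ ?_).trans_eq ?_
  · exact (CFC.posPart_nonneg A).posSemidef.add (CFC.negPart_nonneg B).posSemidef
  · exact (CFC.negPart_nonneg A).posSemidef.add (CFC.posPart_nonneg B).posSemidef
  · simp only [trace_add, Complex.add_re]
    ring

end TraceNorm

section LinearMap

variable {m n : Type*} [Fintype m] [DecidableEq m] [Fintype n] [DecidableEq n]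
  {Φ : Matrix n n ℂ →ₗ[ℂ] Matrix m m ℂ} {ε : ℝ}

lemma traceNorm_map_posSemidef_le (hΦ : ∀ ρ, IsDensityMatrix ρ → traceNorm (Φ ρ) ≤ ε)
    {P : Matrix n n ℂ} (hP : P.PosSemidef) : traceNorm (Φ P) ≤ ε * P.trace.re := by
  obtain hP0 | hP0 := eq_or_ne P 0
  · simp [hP0, traceNorm_eq_re_trace_abs]
  set t := P.trace.re
  have htC : (t : ℂ) = P.trace := hP.ofReal_re_trace
  have ht : 0 < t := (traceNorm_pos hP0).trans_eq hP.traceNorm_eq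
  have hρ : IsDensityMatrix (((t⁻¹ : ℝ) : ℂ) • P) := by
    refine ⟨hP.smul (Complex.zero_le_real.mpr (inv_nonneg.mpr ht.le)), ?_⟩
    rw [trace_smul, ← htC, smul_eq_mul, ← Complex.ofReal_mul, inv_mul_cancel₀ ht.ne',
      Complex.ofReal_one]
  have hPρ : P = (t : ℂ) • ((t⁻¹ : ℝ) : ℂ) • P := by
    rw [smul_smul, ← Complex.ofReal_mul, mul_inv_cancel₀ ht.ne', Complex.ofReal_one, one_smul]
  rw [hPρ, map_smul, traceNorm_real_smul ht.le, mul_comm]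
  exact mul_le_mul_of_nonneg_right (hΦ _ hρ) ht.le

lemma traceNorm_map_le_mul (hΦH : ∀ A, A.IsHermitian → (Φ A).IsHermitian)
    (hΦ : ∀ ρ, IsDensityMatrix ρ → traceNorm (Φ ρ) ≤ ε)
    {A : Matrix n n ℂ} (hA : A.IsHermitian) : traceNorm (Φ A) ≤ ε * traceNorm A := by
  have hA' := hA.isSelfAdjoint
  have hpos := (CFC.posPart_nonneg A).posSemidef
  have hneg := (CFC.negPart_nonneg A).posSemidef
  calc traceNorm (Φ A) = traceNorm (Φ A⁺ - Φ A⁻) := by rw [← map_sub, CFC.posPart_sub_negPart A]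
    _ ≤ traceNorm (Φ A⁺) + traceNorm (Φ A⁻) := (hΦH _ hpos.1).traceNorm_sub_le (hΦH _ hneg.1)
    _ ≤ ε * A⁺.trace.re + ε * A⁻.trace.re :=
        add_le_add (traceNorm_map_posSemidef_le hΦ hpos) (traceNorm_map_posSemidef_le hΦ hneg)
    _ = ε * traceNorm A := by rw [hA.traceNorm_eq_posPart_add_negPart, mul_add]

end LinearMap

section Channel

variable {dA dB : ℕ} {M : Matrix (Fin dA) (Fin dA) ℂ →ₗ[ℂ] Matrix (Fin dB) (Fin dB) ℂ}

lemma IsQuantumChannel.map_isHermitian (hM : IsQuantumChannel M)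
    {A : Matrix (Fin dA) (Fin dA) ℂ} (hA : A.IsHermitian) : (M A).IsHermitian := by
  obtain ⟨k, K, hK, -⟩ := hM
  rw [hK]
  exact isSelfAdjoint_sum _ fun i _ => isHermitian_mul_mul_conjTranspose (K i) hA

lemma IsQuantumChannel.map_posSemidef (hM : IsQuantumChannel M)
    {P : Matrix (Fin dA) (Fin dA) ℂ} (hP : P.PosSemidef) : (M P).PosSemidef := by
  obtain ⟨k, K, hK, -⟩ := hM
  rw [hK]
  exact posSemidef_sum _ fun i _ => hP.mul_mul_conjTranspose_same (K i)

lemma IsQuantumChannel.trace_map (hM : IsQuantumChannel M) (X : Matrix (Fin dA) (Fin dA) ℂ) :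
    (M X).trace = X.trace := by
  obtain ⟨k, K, hK, hTP⟩ := hM
  simp_rw [hK, trace_sum, trace_mul_cycle _ X, ← trace_sum, ← Finset.sum_mul, hTP, one_mul]

lemma IsQuantumChannel.traceNorm_map_le (hM : IsQuantumChannel M)
    {A : Matrix (Fin dA) (Fin dA) ℂ} (hA : A.IsHermitian) : traceNorm (M A) ≤ traceNorm A := by
  refine one_mul (traceNorm A) ▸
    traceNorm_map_le_mul (fun _ => hM.map_isHermitian) (fun ρ hρ => ?_) hA
  rw [(hM.map_posSemidef hρ.1).traceNorm_eq, hM.trace_map, hρ.2, Complex.one_re]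

lemma IsQuantumChannel.le_traceNorm_map_of_approx_correctable {ε : ℝ} (hM : IsQuantumChannel M)
    {R : Matrix (Fin dB) (Fin dB) ℂ →ₗ[ℂ] Matrix (Fin dA) (Fin dA) ℂ} (hR : IsQuantumChannel R)
    (hrec : ∀ ρ, IsDensityMatrix ρ → traceNorm (R (M ρ) - ρ) ≤ ε)
    {A : Matrix (Fin dA) (Fin dA) ℂ} (hA : A.IsHermitian) :
    (1 - ε) * traceNorm A ≤ traceNorm (M A) := by
  have hRM : (R (M A)).IsHermitian := hR.map_isHermitian (hM.map_isHermitian hA)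
  let Φ : Matrix (Fin dA) (Fin dA) ℂ →ₗ[ℂ] Matrix (Fin dA) (Fin dA) ℂ := R ∘ₗ M - LinearMap.id
  have hΦ : ∀ B, Φ B = R (M B) - B := fun _ => rfl
  have hcorr : traceNorm (R (M A) - A) ≤ ε * traceNorm A := by
    rw [← hΦ]
    refine traceNorm_map_le_mul (fun B hB => ?_) (fun ρ hρ => ?_) hA
    · rw [hΦ]
      exact (hR.map_isHermitian (hM.map_isHermitian hB)).sub hB
    · rw [hΦ]
      exact hrec ρ hρ
  calc (1 - ε) * traceNorm A ≤ traceNorm A - traceNorm (R (M A) - A) := by linarith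
    _ ≤ traceNorm (R (M A)) := by
        have := hRM.traceNorm_sub_le (hRM.sub hA)
        rw [sub_sub_cancel] at this
        linarith
    _ ≤ traceNorm (M A) := hR.traceNorm_map_le (hM.map_isHermitian hA)

end Channel

lemma exists_isDensityMatrix_ne {n : Type*} [Fintype n] [DecidableEq n]
    (hn : 1 < Fintype.card n) : ∃ ρ ρ' : Matrix n n ℂ,
      IsDensityMatrix ρ ∧ IsDensityMatrix ρ' ∧ ρ ≠ ρ' := by
  obtain ⟨i, j, hij⟩ := Fintype.exists_pair_of_one_lt_card hn
  have hdensity : ∀ k : n, IsDensityMatrix (diagonal (Pi.single k (1 : ℂ))) := fun k =>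
    ⟨PosSemidef.diagonal fun l => by by_cases h : l = k <;> simp [h], by simp [trace_diagonal]⟩
  refine ⟨_, _, hdensity i, hdensity j, fun h => ?_⟩
  simpa [Pi.single_apply, hij] using congr($h i i)

lemma IsDensityMatrix.smul_sub_smul_ne_zero {n : Type*} [Fintype n] [DecidableEq n]
    {ρ ρ' : Matrix n n ℂ} (hρ : IsDensityMatrix ρ) (hρ' : IsDensityMatrix ρ') (hne : ρ ≠ ρ')
    (p : ℝ) : (p : ℂ) • ρ - ((1 - p : ℝ) : ℂ) • ρ' ≠ 0 := by
  intro h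
  have hp : ((1 - p : ℝ) : ℂ) = p := by
    have htr := congr(trace $h)
    simp only [trace_sub, trace_smul, hρ.2, hρ'.2, smul_eq_mul, mul_one, trace_zero] at htr
    linear_combination -htr
  rw [hp, ← smul_sub, smul_eq_zero, sub_eq_zero] at h
  refine h.elim (fun hp0 => ?_) hne
  simp [hp0] at hp

/-- **Approximate correctability implies approximate distinguishability preservation.**
If `N : A → B` (`dA ≥ 2`) is a quantum channel and there is a quantum channel `R : B → A` with
`‖R(N ρ) − ρ‖₁ ≤ ε` for every density matrix `ρ` on `A`, then `DPmin N ≥ 1 − 2ε`. -/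
theorem DPmin_ge_of_approx_correctable {dA dB : ℕ} (hdA : 2 ≤ dA) (ε : ℝ)
    (N : Matrix (Fin dA) (Fin dA) ℂ →ₗ[ℂ] Matrix (Fin dB) (Fin dB) ℂ)
    (hN : IsQuantumChannel N)
    (R : Matrix (Fin dB) (Fin dB) ℂ →ₗ[ℂ] Matrix (Fin dA) (Fin dA) ℂ)
    (hR : IsQuantumChannel R)
    (hrec : ∀ ρ : Matrix (Fin dA) (Fin dA) ℂ, IsDensityMatrix ρ →
      traceNorm (R (N ρ) - ρ) ≤ ε) :
    1 - 2 * ε ≤ DPmin N := by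
  obtain ⟨ρ₀, ρ₁, hρ₀, hρ₁, hne₀₁⟩ :=
    exists_isDensityMatrix_ne (n := Fin dA) (by rw [Fintype.card_fin]; omega)
  have hε : 0 ≤ ε := (traceNorm_nonneg _).trans (hrec ρ₀ hρ₀)
  refine le_csInf ⟨_, 1, zero_le_one, le_rfl, ρ₀, ρ₁, hρ₀, hρ₁, hne₀₁, rfl⟩ ?_
  rintro _ ⟨p, -, -, ρ, ρ', hρ, hρ', hne, rfl⟩
  set Δ := (p : ℂ) • ρ - ((1 - p : ℝ) : ℂ) • ρ'
  have hΔ : Δ.IsHermitian :=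
    (hρ.1.1.smul (Complex.conj_ofReal _)).sub (hρ'.1.1.smul (Complex.conj_ofReal _))
  have hNΔ : N Δ = (p : ℂ) • N ρ - ((1 - p : ℝ) : ℂ) • N ρ' := by
    rw [map_sub, map_smul, map_smul]
  rw [← hNΔ, le_div_iff₀ (traceNorm_pos (hρ.smul_sub_smul_ne_zero hρ' hne p))]
  calc (1 - 2 * ε) * traceNorm Δ ≤ (1 - ε) * traceNorm Δ := by
        nlinarith [traceNorm_nonneg Δ]
    _ ≤ traceNorm (N Δ) := hN.le_traceNorm_map_of_approx_correctable hR hrec hΔ
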